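/- arXiv:2406.00133 — 2 statements merged into one kernel-verified Lean document; each statement's English description precedes it below -/
import Mathlib

section
/- Let K ≥ 2 be a natural number and a, b real numbers satisfying 0 < a, a ≤ K - 1, and a ≤ b - 1/log(K). Then ∑_{k=1}^{K} (k^a / K^(b+1)) ≤ 1/(a+1). -/
theorem stmt_4 (K : ℕ) (hK : 2 ≤ K) (a b : ℝ) (ha : 0 < a)
    (haK : a ≤ (K : ℝ) - 1) (hab : a ≤ b - 1 / Real.log K) :
    ∑ k ∈ Finset.Icc 1 K, (k : ℝ) ^ a / (K : ℝ) ^ (b + 1) ≤ 1 / (a + 1) := by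
  have hK1 : (1:ℝ) < (K:ℝ) := by exact_mod_cast hK.trans_lt' one_lt_two
  have hK0 : (0:ℝ) < (K:ℝ) := by linarith
  have hlogK : 0 < Real.log K := Real.log_pos hK1
  have ha1 : (0:ℝ) < a + 1 := by linarith
  -- pointwise bound via Bernoulli
  have key : ∀ k : ℕ, 1 ≤ k → (a+1) * (k:ℝ) ^ a ≤ ((k:ℝ)+1) ^ (a+1) - (k:ℝ) ^ (a+1) := by
    intro k hk
    have hk0 : (0:ℝ) < (k:ℝ) := by exact_mod_cast hk
    have hbern : 1 + (a+1) * (1/(k:ℝ)) ≤ (1 + 1/(k:ℝ)) ^ (a+1) :=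
      one_add_mul_self_le_rpow_one_add
        (le_trans (by norm_num : (-1:ℝ) ≤ 0) (by positivity)) (by linarith)
    have hsplit : ((k:ℝ)+1) ^ (a+1) = (k:ℝ) ^ (a+1) * (1 + 1/(k:ℝ)) ^ (a+1) := by
      rw [← Real.mul_rpow (le_of_lt hk0) (by positivity)]
      congr 1; field_simp
    have hka : (k:ℝ) ^ (a+1) = (k:ℝ) ^ a * (k:ℝ) := by
      rw [Real.rpow_add hk0, Real.rpow_one]
    have h2 : (k:ℝ) ^ (a+1) * (1 + (a+1) * (1/(k:ℝ))) ≤ (k:ℝ) ^ (a+1) * (1 + 1/(k:ℝ)) ^ (a+1) :=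
      mul_le_mul_of_nonneg_left hbern (by positivity)
    have h3 : (k:ℝ) ^ (a+1) * (1 + (a+1) * (1/(k:ℝ)))
        = (k:ℝ) ^ (a+1) + (a+1) * (k:ℝ) ^ a := by
      rw [hka]; field_simp
    rw [hsplit]; linarith [h3 ▸ h2]
  -- telescoping sum bound
  have htel : ∑ k ∈ Finset.Icc 1 K, (((k:ℝ)+1) ^ (a+1) - (k:ℝ) ^ (a+1))
      = ((K:ℝ)+1) ^ (a+1) - 1 := by
    have := Finset.sum_range_sub (fun i : ℕ => (((i:ℕ)+1 : ℝ)) ^ (a+1)) K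
    rw [show Finset.Icc 1 K = Finset.Ico 1 (K+1) by rfl, Finset.sum_Ico_eq_sum_range]
    simp only [Nat.add_sub_cancel]
    convert this using 2 with i
    · push_cast; ring_nf
    · norm_num
  have hsum : (a+1) * ∑ k ∈ Finset.Icc 1 K, (k:ℝ) ^ a ≤ ((K:ℝ)+1) ^ (a+1) := by
    rw [Finset.mul_sum]
    calc ∑ k ∈ Finset.Icc 1 K, (a+1) * (k:ℝ) ^ a
        ≤ ∑ k ∈ Finset.Icc 1 K, (((k:ℝ)+1) ^ (a+1) - (k:ℝ) ^ (a+1)) :=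
          Finset.sum_le_sum fun k hk => key k (Finset.mem_Icc.mp hk).1
      _ = ((K:ℝ)+1) ^ (a+1) - 1 := htel
      _ ≤ ((K:ℝ)+1) ^ (a+1) := by linarith
  -- (K+1)^(a+1) ≤ K^(b+1)
  have hpow : ((K:ℝ)+1) ^ (a+1) ≤ (K:ℝ) ^ (b+1) := by
    have hlog1 : Real.log ((K:ℝ)+1) ≤ Real.log K + 1/(K:ℝ) := by
      have h := Real.log_le_sub_one_of_pos (show (0:ℝ) < ((K:ℝ)+1)/(K:ℝ) by positivity)
      rw [Real.log_div (by linarith) (ne_of_gt hK0)] at h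
      have : ((K:ℝ)+1)/(K:ℝ) - 1 = 1/(K:ℝ) := by field_simp; ring
      linarith [this ▸ h]
    have hba : 1 ≤ (b - a) * Real.log K := by
      have h : 1/Real.log K ≤ b - a := by linarith
      rw [div_le_iff₀ hlogK] at h; linarith
    have hK2 : (a+1)/(K:ℝ) ≤ 1 := by
      rw [div_le_one hK0]; linarith
    have hlogs : (a+1) * Real.log ((K:ℝ)+1) ≤ (b+1) * Real.log K := by
      have h1 : (a+1) * Real.log ((K:ℝ)+1) ≤ (a+1) * Real.log K + (a+1)/(K:ℝ) := by
        have := mul_le_mul_of_nonneg_left hlog1 (le_of_lt ha1)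
        calc (a+1) * Real.log ((K:ℝ)+1) ≤ (a+1) * (Real.log K + 1/(K:ℝ)) := this
          _ = (a+1) * Real.log K + (a+1)/(K:ℝ) := by ring
      nlinarith
    calc ((K:ℝ)+1) ^ (a+1) = Real.exp ((a+1) * Real.log ((K:ℝ)+1)) := by
          rw [Real.rpow_def_of_pos (by linarith), mul_comm]
      _ ≤ Real.exp ((b+1) * Real.log K) := Real.exp_le_exp.mpr hlogs
      _ = (K:ℝ) ^ (b+1) := by rw [Real.rpow_def_of_pos hK0, mul_comm]
  -- combine
  have hKb : (0:ℝ) < (K:ℝ) ^ (b+1) := Real.rpow_pos_of_pos hK0 _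
  rw [← Finset.sum_div, div_le_div_iff₀ hKb ha1]
  calc (∑ k ∈ Finset.Icc 1 K, (k:ℝ) ^ a) * (a+1)
      = (a+1) * ∑ k ∈ Finset.Icc 1 K, (k:ℝ) ^ a := by ring
    _ ≤ ((K:ℝ)+1) ^ (a+1) := hsum
    _ ≤ (K:ℝ) ^ (b+1) := hpow
    _ = 1 * (K:ℝ) ^ (b+1) := by ring
end

section
/- Let K ≥ 2 and suppose the group-wise weights satisfy P_k · ω_k = k^a / K^(b+1) for k = 1, …, K, where 0 < a ≤ min{K-1, b - 1/log(K)}. Then ∑_{k=1}^{K} P_k · ω_k ≤ 1/(a+1). -/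
open Real Finset

private lemma sum_rpow_le (a : ℝ) (ha : 0 < a) :
    ∀ n : ℕ, ∑ k ∈ Finset.Icc 1 n, (k : ℝ) ^ a ≤ ((n : ℝ) + 1) ^ (a + 1) / (a + 1) := by
  intro n
  induction n with
  | zero => simp; positivity
  | succ n ih =>
      rw [Finset.sum_Icc_succ_top (by omega)]
      have hm : (0:ℝ) < (n:ℝ) + 1 := by positivity
      have ha1 : (0:ℝ) < a + 1 := by linarith
      have hb := one_add_mul_self_le_rpow_one_add
        (s := 1 / ((n:ℝ) + 1)) (le_trans (by norm_num) (by positivity : (0:ℝ) ≤ 1/((n:ℝ)+1))) (p := a + 1) (by linarith)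
      have key : (((n:ℝ)+1)) ^ (a+1) + (a+1) * ((n:ℝ)+1) ^ a ≤ (((n:ℝ)+1)+1) ^ (a+1) := by
        have h1 : ((((n:ℝ)+1)+1)) ^ (a+1)
            = (1 + 1/((n:ℝ)+1)) ^ (a+1) * ((n:ℝ)+1) ^ (a+1) := by
          rw [← Real.mul_rpow (by positivity) (le_of_lt hm)]
          congr 1
          field_simp
        have h2 : ((n:ℝ)+1) ^ (a+1) = ((n:ℝ)+1) ^ a * ((n:ℝ)+1) := by
          rw [Real.rpow_add hm, Real.rpow_one]
        rw [h1, h2]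
        have := mul_le_mul_of_nonneg_right hb (le_of_lt (by positivity :
          (0:ℝ) < ((n:ℝ)+1) ^ a * ((n:ℝ)+1)))
        calc ((n:ℝ)+1) ^ a * ((n:ℝ)+1) + (a+1) * ((n:ℝ)+1) ^ a
              = (1 + (a+1) * (1/((n:ℝ)+1))) * (((n:ℝ)+1) ^ a * ((n:ℝ)+1)) := by
                field_simp
          _ ≤ (1 + 1/((n:ℝ)+1)) ^ (a+1) * (((n:ℝ)+1) ^ a * ((n:ℝ)+1)) := this
      have step : ((n:ℝ)+1) ^ (a+1) / (a+1) + ((n:ℝ)+1) ^ a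
          ≤ (((n:ℝ)+1)+1) ^ (a+1) / (a+1) := by
        rw [div_add' _ _ _ (ne_of_gt ha1), div_le_div_iff₀ ha1 ha1]
        nlinarith [key]
      push_cast
      linarith [ih, step]

theorem stmt_8 (K : ℕ) (hK : 2 ≤ K) (a b : ℝ) (ha : 0 < a)
    (haK : a ≤ (K : ℝ) - 1) (hab : a ≤ b - 1 / Real.log K)
    (P ω : ℕ → ℝ) (hP : ∀ k ∈ Finset.Icc 1 K, 0 ≤ P k ∧ P k ≤ 1)
    (hω : ∀ k ∈ Finset.Icc 1 K, 0 ≤ ω k)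
    (hPω : ∀ k ∈ Finset.Icc 1 K, P k * ω k = (k : ℝ) ^ a / (K : ℝ) ^ (b + 1)) :
    ∑ k ∈ Finset.Icc 1 K, P k * ω k ≤ 1 / (a + 1) := by
  have hK1 : (1:ℝ) < (K:ℝ) := by exact_mod_cast hK.trans_lt' one_lt_two
  have hK0 : (0:ℝ) < (K:ℝ) := by linarith
  have hlogK : 0 < Real.log K := Real.log_pos hK1
  have ha1 : (0:ℝ) < a + 1 := by linarith
  rw [Finset.sum_congr rfl hPω, ← Finset.sum_div]
  -- key bound: (K+1)^(a+1) ≤ K^(b+1)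
  have hKb : ((K:ℝ) + 1) ^ (a+1) ≤ (K:ℝ) ^ (b+1) := by
    have h1 : ((K:ℝ) + 1) ^ (a+1) = (K:ℝ) ^ (a+1) * (1 + 1/(K:ℝ)) ^ (a+1) := by
      rw [← Real.mul_rpow (le_of_lt hK0) (by positivity)]
      congr 1; field_simp
    have h2 : (1 + 1/(K:ℝ)) ^ (a+1) ≤ Real.exp ((a+1) / K) := by
      calc (1 + 1/(K:ℝ)) ^ (a+1) ≤ (Real.exp (1/(K:ℝ))) ^ (a+1) := by
            apply Real.rpow_le_rpow (by positivity) ?_ (le_of_lt ha1)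
            rw [add_comm]; exact Real.add_one_le_exp _
        _ = Real.exp ((a+1) / K) := by
            rw [← Real.exp_mul]; ring_nf
    have h3 : Real.exp ((a+1) / K) ≤ Real.exp 1 := by
      apply Real.exp_le_exp.2
      rw [div_le_one hK0]; linarith
    have h4 : (K:ℝ) ^ (a+1) * Real.exp 1 ≤ (K:ℝ) ^ (b+1) := by
      have hba : 1 / Real.log K ≤ b - a := by linarith
      have : Real.exp 1 ≤ (K:ℝ) ^ (b - a) := by
        rw [Real.rpow_def_of_pos hK0, Real.exp_le_exp]
        rw [div_le_iff₀ hlogK] at hba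
        linarith [hba]
      calc (K:ℝ) ^ (a+1) * Real.exp 1 ≤ (K:ℝ) ^ (a+1) * (K:ℝ) ^ (b-a) :=
            mul_le_mul_of_nonneg_left this (by positivity)
        _ = (K:ℝ) ^ (b+1) := by rw [← Real.rpow_add hK0]; ring_nf
    calc ((K:ℝ) + 1) ^ (a+1) = (K:ℝ) ^ (a+1) * (1 + 1/(K:ℝ)) ^ (a+1) := h1
      _ ≤ (K:ℝ) ^ (a+1) * Real.exp 1 := by
          apply mul_le_mul_of_nonneg_left (h2.trans h3) (by positivity)
      _ ≤ (K:ℝ) ^ (b+1) := h4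
  have hsum := sum_rpow_le a ha K
  have hKbpos : (0:ℝ) < (K:ℝ) ^ (b+1) := Real.rpow_pos_of_pos hK0 _
  rw [div_le_div_iff₀ hKbpos ha1, one_mul]
  calc (∑ k ∈ Finset.Icc 1 K, (k:ℝ) ^ a) * (a+1)
      ≤ (((K:ℝ)+1) ^ (a+1) / (a+1)) * (a+1) := by
        apply mul_le_mul_of_nonneg_right hsum (le_of_lt ha1)
    _ = ((K:ℝ)+1) ^ (a+1) := by field_simp
    _ ≤ (K:ℝ) ^ (b+1) := hKb
end
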